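/- Lower bound for the L^p Fourier average of the Hamming variety measure: for p ≥ 1 and d ≥ 2, with μ_j the surface measure on H_j ⊆ F^d (j ≠ 0), one has ‖μ̂_j‖_p ≥ c(d,p) · |F|^{−(1 + (d−1)/p)} with c(d,p) > 0 independent of |F|. Consequently H_j is not (p,s)-Salem for any s > 1/(d−1) + 1/p. -/

import Mathlib

/-!
For `a ≠ 0` the Fourier coefficient of `μ_j` at `a • e_i` is exactly `-(|F| - 1)⁻¹`. Indeed, the
scalings `x ↦ (…, s x_i, …, s⁻¹ x_k, …)` with `s ≠ 0` preserve `H_j`, so `∑_{x ∈ H_j} χ(c x_i)` does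
not change when `c` is replaced by `s c`; summing over all `s ∈ F` makes each inner character sum
vanish (as `x_i ≠ 0` on `H_j`), which gives `(|F| - 1) ∑_{x ∈ H_j} χ(c x_i) + |H_j| = 0`.
Keeping only these `|F| - 1` frequencies, `∑_{m ≠ 0} |μ̂_j(m)|^p ≥ (|F| - 1)^{1-p} ≥ |F|^{1-p}`,
and the bound holds with `c = 1`.
-/

open Finset

/-- The Fourier transform of the surface measure on `E ⊆ F^d`. -/
noncomputable def surfHat {F : Type*} [Field F] [Fintype F] {d : ℕ}
    (χ : AddChar F ℂ) (E : Finset (Fin d → F)) (ξ : Fin d → F) : ℂ :=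
  (E.card : ℂ)⁻¹ * ∑ x ∈ E, χ (-(∑ i, ξ i * x i))

section HammingVariety

variable {M ι β : Type*} [CommMonoid M] [Fintype M] [DecidableEq M] [Fintype ι] [DecidableEq ι]

def hammingVariety (M ι : Type*) [CommMonoid M] [Fintype M] [DecidableEq M] [Fintype ι]
    [DecidableEq ι] (j : M) : Finset (ι → M) :=
  univ.filter fun x => ∏ k, x k = j

theorem mem_hammingVariety {j : M} {x : ι → M} : x ∈ hammingVariety M ι j ↔ ∏ k, x k = j := by
  simp [hammingVariety]

theorem hammingVariety_nonempty [Nonempty ι] (j : M) : (hammingVariety M ι j).Nonempty :=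
  ⟨Pi.mulSingle (Classical.arbitrary ι) j,
    mem_hammingVariety.2 (Fintype.prod_pi_mulSingle' _ _)⟩

theorem sum_hammingVariety_comp_units_mul [AddCommMonoid β] (v : ι → Mˣ) (hv : ∏ k, v k = 1)
    (j : M) (f : (ι → M) → β) :
    ∑ x ∈ hammingVariety M ι j, f (fun k => v k * x k) = ∑ x ∈ hammingVariety M ι j, f x := by
  refine sum_equiv (Equiv.piCongrRight fun k => (v k).mulLeft) (fun x => ?_) (fun _ _ => rfl)
  simp [mem_hammingVariety, prod_mul_distrib, ← Units.coe_prod, hv]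

theorem sum_hammingVariety_comp_mul_apply [AddCommMonoid β] {i k : ι} (hik : i ≠ k) (u : Mˣ)
    (j : M) (f : M → β) :
    ∑ x ∈ hammingVariety M ι j, f (u * x i) = ∑ x ∈ hammingVariety M ι j, f (x i) := by
  have hv : ∏ l, (Pi.mulSingle i u * Pi.mulSingle k u⁻¹ : ι → Mˣ) l = 1 := by
    simp [prod_mul_distrib]
  simpa [Pi.mulSingle_apply, hik] using
    sum_hammingVariety_comp_units_mul _ hv j fun x => f (x i)

end HammingVariety

section CharacterSum

variable {F ι R : Type*} [Field F] [Fintype F] [DecidableEq F] [Fintype ι] [DecidableEq ι]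
  [CommRing R] [IsDomain R]

theorem card_sub_one_mul_sum_addChar_hammingVariety {ψ : AddChar F R} (hψ : ψ ≠ 1) {i k : ι}
    (hik : i ≠ k) {c j : F} (hc : c ≠ 0) (hj : j ≠ 0) :
    ((Fintype.card F : R) - 1) * ∑ x ∈ hammingVariety F ι j, ψ (c * x i) =
      -#(hammingVariety F ι j) := by
  set H := hammingVariety F ι j
  have hcoord : ∀ x ∈ H, c * x i ≠ 0 := fun x hx =>
    mul_ne_zero hc (prod_ne_zero_iff.1 ((mem_hammingVariety.1 hx).symm ▸ hj) i (mem_univ i))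
  have hvanish : ∑ s : F, ∑ x ∈ H, ψ (c * (s * x i)) = 0 := by
    rw [sum_comm]
    refine sum_eq_zero fun x hx => ?_
    simpa [mul_left_comm c, hcoord x hx] using
      AddChar.sum_mulShift (c * x i) (AddChar.IsPrimitive.of_ne_one hψ)
  have hinvariant : ∀ s ∈ univ.erase (0 : F),
      ∑ x ∈ H, ψ (c * (s * x i)) = ∑ x ∈ H, ψ (c * x i) := fun s hs =>
    sum_hammingVariety_comp_mul_apply hik (Units.mk0 s (ne_of_mem_erase hs)) j (ψ <| c * ·)
  rw [← add_sum_erase _ _ (mem_univ 0), sum_congr rfl hinvariant] at hvanish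
  simp only [zero_mul, mul_zero, AddChar.map_zero_eq_one, sum_const, nsmul_eq_mul, mul_one,
    card_erase_of_mem (mem_univ _), card_univ] at hvanish
  rw [Nat.cast_sub Fintype.card_pos] at hvanish
  linear_combination hvanish

end CharacterSum

section FourierTransform

variable {F : Type*} [Field F] [Fintype F] [DecidableEq F] {d : ℕ}

theorem surfHat_hammingVariety_pi_single {χ : AddChar F ℂ} (hχ : χ ≠ 1) (hd : 1 < d)
    (i : Fin d) {a j : F} (ha : a ≠ 0) (hj : j ≠ 0) :
    surfHat χ (hammingVariety F (Fin d) j) (Pi.single i a) = -((Fintype.card F : ℂ) - 1)⁻¹ := by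
  have : Nontrivial (Fin d) := Fin.nontrivial_iff_two_le.2 hd
  obtain ⟨k, hik⟩ := exists_ne i
  have hcard : (#(hammingVariety F (Fin d) j) : ℂ) ≠ 0 := by
    have : Nonempty (Fin d) := ⟨i⟩
    exact_mod_cast (hammingVariety_nonempty j).card_ne_zero
  have hq : (Fintype.card F : ℂ) - 1 ≠ 0 := by
    rw [sub_ne_zero]
    exact_mod_cast Fintype.one_lt_card.ne'
  have hsum := card_sub_one_mul_sum_addChar_hammingVariety hχ hik.symm (neg_ne_zero.2 ha) hj
  simp only [neg_mul] at hsum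
  simp only [surfHat, Pi.single_apply, ite_mul, zero_mul, sum_ite_eq', mem_univ, if_true]
  field_simp
  linear_combination hsum

theorem sub_one_rpow_le_sum_norm_surfHat_hammingVariety_rpow {χ : AddChar F ℂ} (hχ : χ ≠ 1)
    (hd : 1 < d) (p : ℝ) {j : F} (hj : j ≠ 0) :
    ((Fintype.card F : ℝ) - 1) ^ (1 - p) ≤
      ∑ m ∈ univ.filter (fun m : Fin d → F => m ≠ 0),
        ‖surfHat χ (hammingVariety F (Fin d) j) m‖ ^ p := by
  set i : Fin d := ⟨0, by omega⟩
  have hq : (0 : ℝ) < (Fintype.card F : ℝ) - 1 := by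
    rw [sub_pos]
    exact_mod_cast Fintype.one_lt_card
  have hnorm : ∀ a ∈ univ.erase (0 : F),
      ‖surfHat χ (hammingVariety F (Fin d) j) (Pi.single i a)‖ ^ p =
        ((Fintype.card F : ℝ) - 1)⁻¹ ^ p := fun a ha => by
    rw [surfHat_hammingVariety_pi_single hχ hd i (ne_of_mem_erase ha) hj, norm_neg, norm_inv,
      show (Fintype.card F : ℂ) - 1 = (((Fintype.card F : ℝ) - 1 : ℝ) : ℂ) by push_cast; rfl,
      Complex.norm_real, Real.norm_of_nonneg hq.le]
  calc ((Fintype.card F : ℝ) - 1) ^ (1 - p)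
      = ∑ a ∈ univ.erase (0 : F), ‖surfHat χ (hammingVariety F (Fin d) j) (Pi.single i a)‖ ^ p := by
        rw [sum_congr rfl hnorm, sum_const, card_erase_of_mem (mem_univ _), card_univ,
          nsmul_eq_mul, Nat.cast_sub Fintype.card_pos, Nat.cast_one, Real.rpow_sub hq,
          Real.rpow_one, Real.inv_rpow hq.le, div_eq_mul_inv]
    _ = ∑ m ∈ (univ.erase (0 : F)).image (Pi.single i),
          ‖surfHat χ (hammingVariety F (Fin d) j) m‖ ^ p := by
        rw [sum_image fun _ _ _ _ h => Pi.single_injective i h]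
    _ ≤ _ := by
      refine sum_le_sum_of_subset_of_nonneg (fun m hm => ?_) fun _ _ _ => by positivity
      obtain ⟨a, ha, rfl⟩ := mem_image.1 hm
      simpa using ne_of_mem_erase ha

end FourierTransform

/-- Lower bound for the `L^p` Fourier average of the Hamming variety measure:
for `p ≥ 1`, `d ≥ 2`, there is `c = c(d,p) > 0`, independent of the field, with
`‖μ̂_j‖_p ≥ c |F|^{−(1+(d−1)/p)}` for every finite field `F`, nontrivial character `χ`,
and `j ≠ 0`. -/
theorem hamming_lp_lower (d : ℕ) (hd : 2 ≤ d) (p : ℝ) (hp : 1 ≤ p) :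
    ∃ c : ℝ, 0 < c ∧
      ∀ (F : Type) [Field F] [Fintype F] [DecidableEq F] (χ : AddChar F ℂ),
        χ ≠ 1 → ∀ j : F, j ≠ 0 →
        c * (Fintype.card F : ℝ) ^ (-(1 + ((d : ℝ) - 1) / p)) ≤
          ((Fintype.card F : ℝ) ^ (-(d : ℝ)) *
            ∑ m ∈ univ.filter (fun m : Fin d → F => m ≠ 0),
              ‖(surfHat χ (univ.filter (fun x : Fin d → F => ∏ k, x k = j)) m)‖ ^ p) ^
            (1 / p) := by
  refine ⟨1, one_pos, fun F _ _ _ χ hχ j hj => ?_⟩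
  set q : ℝ := (Fintype.card F : ℝ)
  have hq : 1 < q := Nat.one_lt_cast.2 Fintype.one_lt_card
  have hp0 : 0 < p := by linarith
  calc 1 * q ^ (-(1 + ((d : ℝ) - 1) / p))
      = (q ^ (-(d : ℝ)) * q ^ (1 - p)) ^ (1 / p) := by
        rw [one_mul, ← Real.rpow_add (by linarith), ← Real.rpow_mul (by linarith)]
        congr 1
        field_simp
        ring
    _ ≤ (q ^ (-(d : ℝ)) * (q - 1) ^ (1 - p)) ^ (1 / p) := by
        gcongr (q ^ (-(d : ℝ)) * ?_) ^ (1 / p)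
        exact Real.rpow_le_rpow_of_nonpos (sub_pos.2 hq) (sub_le_self _ zero_le_one) (by linarith)
    _ ≤ _ := by
        gcongr
        exact sub_one_rpow_le_sum_norm_surfHat_hammingVariety_rpow hχ hd p hj
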